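/- arXiv:0902.3143 — 2 statements merged into one kernel-verified Lean document; each statement's English description precedes it below -/
import Mathlib

section
/- If γ ∈ SL₃(ℝ) preserves a properly convex open subset of ℙ²(ℝ) and has a non-real eigenvalue, then the unique real eigenvalue of γ equals 1. -/
/-!
Factor the characteristic polynomial as `(X² - 2 Re z X + |z|²)(X - μ)` with `z` non-real; then
`det γ = μ |z|² = 1`, so it suffices to show `μ² = |z|²`.

Suppose `μ² < |z|²`. The map `T = γ² / |z|²` preserves the cone `C` over `Ω`, contracts the
`μ`-eigenline and rotates the invariant plane by `ζ = z / z̄ ≠ 1`. For the infinitely many `n`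
with `Re ζⁿ ≤ 0`, the nonnegative combination `-2 Re(ζⁿ) Tⁿ + T²ⁿ` acts as `-1` on that plane.
Applying it to a point `u + w` of `C` and letting `n → ∞` puts `-w`, and then `w`, in the
closure of `C`, so the whole line through `u + w` in direction `w` lies in `C`: impossible for a
properly convex cone. The case `μ² > |z|²` is the same argument for `γ⁻¹`.
-/

/-- `C` is the cone over a (nonempty) properly convex open subset `Ω` of `ℙ²(ℝ)`:
an open convex cone in `ℝ³` containing no affine line. -/
def IsProperConeR3 (C : Set (Fin 3 → ℝ)) : Prop :=
  IsOpen C ∧ Convex ℝ C ∧ C.Nonempty ∧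
    (∀ v ∈ C, ∀ r : ℝ, 0 < r → r • v ∈ C) ∧
    ¬ ∃ a b : Fin 3 → ℝ, b ≠ 0 ∧ ∀ t : ℝ, a + t • b ∈ C

/-- `A` preserves the properly convex open set `Ω = P(C) ⊆ ℙ²(ℝ)`: its linear action
maps the cone `C` onto `C` or onto `-C`. -/
def PreservesConeR3 (A : Matrix (Fin 3) (Fin 3) ℝ) (C : Set (Fin 3 → ℝ)) : Prop :=
  A.mulVecLin '' C = C ∨ A.mulVecLin '' C = (fun v => -v) '' C

open Polynomial Filter Topology Set

theorem Complex.frequently_re_pow_nonpos {ζ : ℂ} (hζ : ‖ζ‖ = 1) (hζ1 : ζ ≠ 1) :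
    ∃ᶠ n in atTop, (ζ ^ n).re ≤ 0 := by
  -- If `Re ζⁿ > 0` for all `n ≥ N`, the doubling formula `Re ζ²ⁿ = 2 (Re ζⁿ)² - 1` gives
  -- `Re ζⁿ ≥ 1/2` there, while the geometric sums `∑ ζ^(N + i)` stay bounded.
  rw [frequently_atTop]
  intro N
  by_contra! hpos
  have hnorm : ∀ n, ‖ζ ^ n‖ = 1 := fun n => by rw [norm_pow, hζ, one_pow]
  have hhalf : ∀ n ≥ N, 1 / 2 ≤ (ζ ^ n).re := by
    intro n hn
    have hdouble : (ζ ^ (2 * n)).re = 2 * (ζ ^ n).re ^ 2 - 1 := by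
      have hsq := Complex.sq_norm (ζ ^ n)
      rw [hnorm, Complex.normSq_apply] at hsq
      rw [pow_mul', sq, Complex.mul_re]
      nlinarith
    have h2n := hpos (2 * n) (by omega)
    have hle := (Complex.re_le_norm (ζ ^ n)).trans_eq (hnorm n)
    nlinarith [hpos n hn]
  have hsub : 0 < ‖ζ - 1‖ := norm_pos_iff.2 (sub_ne_zero.2 hζ1)
  obtain ⟨m, hm⟩ := exists_nat_gt (4 / ‖ζ - 1‖)
  have hlow : (m : ℝ) / 2 ≤ (∑ i ∈ Finset.range m, ζ ^ (N + i)).re := by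
    rw [Complex.re_sum]
    calc (m : ℝ) / 2 = ∑ i ∈ Finset.range m, (1 / 2 : ℝ) := by
          rw [Finset.sum_const, Finset.card_range, nsmul_eq_mul]; ring
      _ ≤ _ := Finset.sum_le_sum fun i _ => hhalf _ (by omega)
  have hup : ‖∑ i ∈ Finset.range m, ζ ^ (N + i)‖ ≤ 2 / ‖ζ - 1‖ := by
    simp_rw [pow_add]
    rw [← Finset.mul_sum, geom_sum_eq hζ1, norm_mul, norm_div, hnorm, one_mul]
    gcongr
    calc ‖ζ ^ m - 1‖ ≤ ‖ζ ^ m‖ + ‖(1 : ℂ)‖ := norm_sub_le _ _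
      _ = 2 := by rw [hnorm, norm_one]; norm_num
  have := (Complex.re_le_norm _).trans hup
  rw [div_lt_iff₀ hsub] at hm
  rw [le_div_iff₀ hsub] at this
  nlinarith

/-- `(X - z) * (X - conj z)`, a polynomial with real coefficients. -/
noncomputable def realQuadratic (z : ℂ) : ℝ[X] :=
  X ^ 2 - C (2 * z.re) * X + C (‖z‖ ^ 2)

section RealQuadratic

variable (z : ℂ)

theorem monic_realQuadratic : (realQuadratic z).Monic := by
  unfold realQuadratic; monicity!

theorem natDegree_realQuadratic : (realQuadratic z).natDegree = 2 := by
  unfold realQuadratic; compute_degree!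

theorem eval_realQuadratic (x : ℝ) : (realQuadratic z).eval x = (x - z.re) ^ 2 + z.im ^ 2 := by
  simp only [realQuadratic, eval_add, eval_sub, eval_mul, eval_pow, eval_X, eval_C,
    Complex.sq_norm, Complex.normSq_apply]
  ring

theorem coeff_zero_realQuadratic : (realQuadratic z).coeff 0 = ‖z‖ ^ 2 := by
  rw [realQuadratic, coeff_add, coeff_C_zero]
  simp

theorem aeval_self_realQuadratic : aeval z (realQuadratic z) = 0 := by
  have hre := Complex.add_conj z
  push_cast at hre
  simp only [realQuadratic, map_add, map_sub, map_mul, map_pow, aeval_X, aeval_C,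
    Complex.coe_algebraMap, Complex.ofReal_ofNat]
  linear_combination z * hre - Complex.mul_conj' z

theorem aeval_realQuadratic_apply {V : Type*} [AddCommGroup V] [Module ℝ V]
    (f : Module.End ℝ V) (v : V) :
    aeval f (realQuadratic z) v = f (f v) - (2 * z.re) • f v + (‖z‖ ^ 2) • v := by
  simp only [realQuadratic, sq, map_add, map_sub, map_mul, aeval_X, aeval_C,
    Algebra.algebraMap_eq_smul_one, LinearMap.add_apply, LinearMap.sub_apply,
    Module.End.mul_apply, LinearMap.smul_apply, Module.End.one_apply]
  module

variable {z}

theorem isCoprime_X_sub_C_realQuadratic (hz : z.im ≠ 0) (μ : ℝ) :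
    IsCoprime (X - C μ) (realQuadratic z) := by
  rw [(irreducible_X_sub_C μ).coprime_iff_not_dvd, dvd_iff_isRoot, IsRoot, eval_realQuadratic]
  positivity

theorem Polynomial.Monic.exists_eq_realQuadratic_mul {p : ℝ[X]} (hp : p.Monic)
    (hdeg : p.natDegree = 3) (hz : aeval z p = 0) (him : z.im ≠ 0) :
    ∃ μ : ℝ, p = realQuadratic z * (X - C μ) := by
  obtain ⟨l, rfl⟩ : realQuadratic z ∣ p := p.quadratic_dvd_of_aeval_eq_zero_im_ne_zero hz him
  have hl : l.Monic := (monic_realQuadratic z).of_mul_monic_left hp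
  have hl1 : l.natDegree = 1 := by
    rw [(monic_realQuadratic z).natDegree_mul hl, natDegree_realQuadratic] at hdeg
    omega
  refine ⟨-l.coeff 0, congrArg _ ?_⟩
  conv_lhs => rw [hl.eq_X_add_C hl1]
  rw [map_neg, sub_neg_eq_add]

theorem eq_of_aeval_realQuadratic_mul_eq_zero (hz : z.im ≠ 0) {μ : ℝ} {x : ℂ} (hx : x.im = 0)
    (h : aeval x (realQuadratic z * (X - C μ)) = 0) : x = μ := by
  have hxre : x = (x.re : ℂ) := Complex.ext rfl (by simpa using hx)
  rw [hxre, ← Complex.coe_algebraMap, aeval_algebraMap_apply_eq_algebraMap_eval, eval_mul,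
    eval_sub, eval_X, eval_C, eval_realQuadratic] at h
  have hq : (x.re - z.re) ^ 2 + z.im ^ 2 ≠ 0 := by positivity
  rw [hxre, sub_eq_zero.1 ((mul_eq_zero.1 (Complex.ofReal_eq_zero.1 h)).resolve_left hq)]

end RealQuadratic

namespace ConvexCone

variable {V : Type*} [NormedAddCommGroup V] [NormedSpace ℝ V] {K : ConvexCone ℝ V}

theorem add_mem_of_mem_closure (hK : IsOpen (K : Set V)) {x y : V} (hx : x ∈ K)
    (hy : y ∈ closure (K : Set V)) : x + y ∈ K := by
  have hmid : (1 / 2 : ℝ) • x + (1 / 2 : ℝ) • y ∈ K := by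
    rw [← SetLike.mem_coe, ← hK.interior_eq]
    exact K.convex.combo_interior_closure_mem_interior (hK.interior_eq.symm ▸ hx) hy
      (by norm_num) (by norm_num) (by norm_num)
  convert K.smul_mem two_pos hmid using 1
  module

theorem eq_zero_of_mem_closure_of_neg_mem_closure (hK : IsOpen (K : Set V))
    (hne : (K : Set V).Nonempty) (hline : ¬ ∃ a b : V, b ≠ 0 ∧ ∀ t : ℝ, a + t • b ∈ K) {w : V}
    (hw : w ∈ closure (K : Set V)) (hw' : -w ∈ closure (K : Set V)) : w = 0 := by
  obtain ⟨x, hx⟩ := hne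
  by_contra hw0
  refine hline ⟨x, w, hw0, fun t => ?_⟩
  rcases lt_trichotomy t 0 with ht | rfl | ht
  · have htw := K.closure.smul_mem (neg_pos.2 ht) hw'
    rw [smul_neg, neg_smul, neg_neg] at htw
    exact add_mem_of_mem_closure hK hx htw
  · simpa using hx
  · exact add_mem_of_mem_closure hK hx (K.closure.smul_mem ht hw)

theorem neg_mem_of_rotation (hK : IsClosed (K : Set V)) {T : V →ₗ[ℝ] V} (hT : MapsTo T K K)
    {ζ : ℂ} (hζ : ‖ζ‖ = 1) (hζ1 : ζ ≠ 1) {W : ℂ →ₗ[ℝ] V} (hW : ∀ ξ, T (W ξ) = W (ζ * ξ))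
    {y : V} (hy : Tendsto (fun n => (T ^ n) y) atTop (𝓝 0)) {ξ : ℂ} (hx : y + W ξ ∈ K) :
    W (-ξ) ∈ K := by
  set a : ℕ → ℝ := fun n => -2 * (ζ ^ n).re with ha
  have hTW : ∀ n η, (T ^ n) (W η) = W (ζ ^ n * η) := by
    intro n
    induction n with
    | zero => simp
    | succ n ih => intro η; rw [pow_succ, Module.End.mul_apply, hW, ih, pow_succ, mul_assoc]
  -- on the range of `W`, the combination `a n • T ^ n + T ^ (2 * n)` acts as `-1`
  have hcancel : ∀ n, (a n : ℂ) * ζ ^ n + ζ ^ (2 * n) = -1 := by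
    intro n
    have hunit : ζ ^ n * (starRingEnd ℂ) (ζ ^ n) = 1 := by
      rw [Complex.mul_conj, Complex.normSq_eq_norm_sq, norm_pow, hζ]
      simp
    have han : (a n : ℂ) = -(ζ ^ n + (starRingEnd ℂ) (ζ ^ n)) := by
      rw [Complex.add_conj]
      push_cast [ha]
      ring
    rw [han, pow_mul', sq]
    linear_combination -hunit
  have hcomb : ∀ n, a n • (T ^ n) (y + W ξ) + (T ^ (2 * n)) (y + W ξ)
      = (a n • (T ^ n) y + (T ^ (2 * n)) y) + W (-ξ) := by
    intro n
    rw [← neg_one_mul ξ, ← hcancel n, map_add, map_add, hTW, hTW, add_mul, map_add, mul_assoc,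
      ← Complex.real_smul, map_smul, smul_add]
    abel
  have hmem : ∃ᶠ n in atTop, a n • (T ^ n) (y + W ξ) + (T ^ (2 * n)) (y + W ξ) ∈ K := by
    have hTn : ∀ m, (T ^ m) (y + W ξ) ∈ K := fun m => by
      rw [Module.End.coe_pow]
      exact hT.iterate m hx
    refine (Complex.frequently_re_pow_nonpos hζ hζ1).mono fun n hn => ?_
    rcases (show 0 ≤ a n by simp only [ha]; linarith).eq_or_lt with h | h
    · rw [← h, zero_smul, zero_add]
      exact hTn _
    · exact K.add_mem (K.smul_mem h (hTn n)) (hTn _)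
  have hlim : Tendsto (fun n => (a n • (T ^ n) y + (T ^ (2 * n)) y) + W (-ξ)) atTop
      (𝓝 (W (-ξ))) := by
    have hbdd : IsBoundedUnder (· ≤ ·) atTop (norm ∘ a) := by
      refine isBoundedUnder_of ⟨2, fun n => ?_⟩
      have := Complex.abs_re_le_norm (ζ ^ n)
      rw [norm_pow, hζ, one_pow] at this
      simp only [Function.comp, ha, Real.norm_eq_abs, abs_mul, abs_neg, abs_two]
      linarith
    have h2 : Tendsto (fun n => (T ^ (2 * n)) y) atTop (𝓝 0) :=
      hy.comp (tendsto_id.const_mul_atTop' two_pos)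
    simpa using ((hbdd.smul_tendsto_zero hy).add h2).add_const (W (-ξ))
  simp_rw [hcomb] at hmem
  exact hK.mem_of_frequently_of_tendsto hmem hlim

variable [FiniteDimensional ℝ V]

theorem add_notMem_of_rotation (hK : IsOpen (K : Set V))
    (hline : ¬ ∃ a b : V, b ≠ 0 ∧ ∀ t : ℝ, a + t • b ∈ K) {T : V →ₗ[ℝ] V} (hT : MapsTo T K K)
    {ε : ℝ} (hε : |ε| < 1) {u : V} (hu : T u = ε • u) {ζ : ℂ} (hζ : ‖ζ‖ = 1) (hζ1 : ζ ≠ 1)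
    {W : ℂ →ₗ[ℝ] V} (hW : ∀ ξ, T (W ξ) = W (ζ * ξ)) (hW1 : W 1 ≠ 0) : u + W 1 ∉ K := by
  intro hc
  have hTK : MapsTo T (K.closure : Set V) K.closure :=
    hT.closure T.continuous_of_finiteDimensional
  have hu0 : Tendsto (fun n => (T ^ n) u) atTop (𝓝 0) := by
    have hTn : ∀ n, (T ^ n) u = ε ^ n • u := by
      intro n
      induction n with
      | zero => simp
      | succ n ih =>
        rw [pow_succ, Module.End.mul_apply, hu, map_smul, ih, smul_smul, pow_succ, mul_comm]
    simpa [hTn] using (tendsto_pow_atTop_nhds_zero_of_abs_lt_one hε).smul_const u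
  have hneg : W (-1) ∈ K.closure :=
    neg_mem_of_rotation isClosed_closure hTK hζ hζ1 hW hu0 (subset_closure hc)
  have hpos : W (-(-1)) ∈ K.closure :=
    neg_mem_of_rotation isClosed_closure hTK hζ hζ1 hW (y := 0) (by simp) (by simpa using hneg)
  rw [map_neg] at hneg
  rw [neg_neg] at hpos
  exact hW1 (eq_zero_of_mem_closure_of_neg_mem_closure hK ⟨_, hc⟩ hline hpos hneg)

theorem sq_norm_le_sq_of_mapsTo (hK : IsOpen (K : Set V))
    (hline : ¬ ∃ a b : V, b ≠ 0 ∧ ∀ t : ℝ, a + t • b ∈ K) {f : V →ₗ[ℝ] V}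
    (hf : MapsTo (fun x => f (f x)) K K) {μ : ℝ} {u : V} (hu : f u = μ • u) {z : ℂ}
    (hz : z.im ≠ 0) {W : ℂ →ₗ[ℝ] V} (hW : ∀ ξ, f (W ξ) = W (z * ξ)) (hW1 : W 1 ≠ 0)
    (hc : u + W 1 ∈ K) : ‖z‖ ^ 2 ≤ μ ^ 2 := by
  by_contra! hlt
  have hρ : 0 < ‖z‖ ^ 2 := by
    have : z ≠ 0 := by rintro rfl; simp at hz
    positivity
  -- `‖z‖⁻² f²` contracts `u` and rotates the range of `W` by `ζ = z / conj z`
  set T : V →ₗ[ℝ] V := (‖z‖ ^ 2)⁻¹ • (f * f)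
  have hT : MapsTo T K K := fun x hx => K.smul_mem (inv_pos.2 hρ) (hf hx)
  have hε : |(‖z‖ ^ 2)⁻¹ * μ ^ 2| < 1 := by
    rw [abs_of_nonneg (by positivity), inv_mul_lt_iff₀ hρ]
    linarith
  have hTu : T u = ((‖z‖ ^ 2)⁻¹ * μ ^ 2) • u := by
    simp only [T, LinearMap.smul_apply, Module.End.mul_apply, hu, map_smul, smul_smul]
    ring_nf
  set ζ : ℂ := ((‖z‖ ^ 2)⁻¹ : ℝ) * z ^ 2
  have hζ : ‖ζ‖ = 1 := by
    simp only [ζ, norm_mul, norm_pow, Complex.norm_real, Real.norm_eq_abs,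
      abs_of_pos (inv_pos.2 hρ)]
    exact inv_mul_cancel₀ hρ.ne'
  have hζ1 : ζ ≠ 1 := by
    intro h
    have hzz : z * z = z * (starRingEnd ℂ) z := by
      rw [Complex.mul_conj, Complex.normSq_eq_norm_sq, ← sq]
      have hρC : ((‖z‖ ^ 2 : ℝ) : ℂ) ≠ 0 := by exact_mod_cast hρ.ne'
      simp only [ζ, Complex.ofReal_inv] at h
      rw [inv_mul_eq_one₀ hρC] at h
      exact_mod_cast h.symm
    exact hz (Complex.conj_eq_iff_im.1 (mul_left_cancel₀ (by rintro rfl; simp at hz) hzz).symm)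
  have hTW : ∀ ξ, T (W ξ) = W (ζ * ξ) := by
    intro ξ
    simp only [T, ζ, LinearMap.smul_apply, Module.End.mul_apply, hW, ← map_smul,
      Complex.real_smul]
    ring_nf
  exact add_notMem_of_rotation hK hline hT hε hTu hζ hζ1 hTW hW1 hc

end ConvexCone

theorem exists_intertwining_of_aeval_realQuadratic_eq_zero {V : Type*} [AddCommGroup V]
    [Module ℝ V] {f : Module.End ℝ V} {z : ℂ} (hz : z.im ≠ 0) {w : V}
    (hw : aeval f (realQuadratic z) w = 0) :
    ∃ W : ℂ →ₗ[ℝ] V, W 1 = w ∧ ∀ ξ, f (W ξ) = W (z * ξ) := by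
  set w' := z.im⁻¹ • (f w - z.re • w)
  have hfw : f w = z.re • w + z.im • w' := by
    simp only [w', smul_smul, mul_inv_cancel₀ hz, one_smul, add_sub_cancel]
  have hffw : f (f w) = (2 * z.re) • f w - (z.re ^ 2 + z.im ^ 2) • w := by
    rw [aeval_realQuadratic_apply, Complex.sq_norm, Complex.normSq_apply] at hw
    rw [← sub_eq_zero, ← hw]
    module
  have hfw' : f w' = z.re • w' - z.im • w := by
    calc f w' = z.im⁻¹ • (f (f w) - z.re • f w) := by simp only [w', map_smul, map_sub]
      _ = z.re • w' - z.im • w := by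
        rw [hffw, hfw]
        match_scalars <;> field_simp <;> ring
  refine ⟨Complex.reLm.smulRight w + Complex.imLm.smulRight w', by simp, fun ξ => ?_⟩
  simp only [LinearMap.add_apply, LinearMap.smulRight_apply, Complex.reLm_coe, Complex.imLm_coe,
    map_add, map_smul, hfw, hfw', Complex.mul_re, Complex.mul_im]
  module

theorem IsOpen.exists_add_mem_of_aeval_mul_eq_zero {V : Type*} [NormedAddCommGroup V]
    [NormedSpace ℝ V] {K : Set V} (hK : IsOpen K) (hne : K.Nonempty) {f : Module.End ℝ V}
    {p q : ℝ[X]} (hpq : IsCoprime p q) (hf : aeval f (p * q) = 0) (hp : aeval f p ≠ 0) :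
    ∃ u w, u + w ∈ K ∧ aeval f p u = 0 ∧ aeval f q w = 0 ∧ w ≠ 0 := by
  obtain ⟨c, hcK, hc⟩ : ∃ c ∈ K, aeval f p c ≠ 0 := by
    by_contra! h
    refine hp (LinearMap.ker_eq_top.1 (Submodule.eq_top_of_nonempty_interior' _ ?_))
    exact hne.mono (interior_maximal h hK)
  have hc' : c ∈ LinearMap.ker (aeval f p) ⊔ LinearMap.ker (aeval f q) := by
    rw [sup_ker_aeval_eq_ker_aeval_mul_of_coprime f hpq, hf, LinearMap.ker_zero]
    trivial
  obtain ⟨u, hu, w, hw, rfl⟩ := Submodule.mem_sup.1 hc'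
  refine ⟨u, w, hcK, hu, hw, ?_⟩
  rintro rfl
  exact hc (by simpa using hu)

theorem Matrix.ne_smul_one_of_aeval_charpoly_eq_zero {n : Type*} [Fintype n] [DecidableEq n]
    {A : Matrix n n ℝ} {z : ℂ} (hz : aeval z A.charpoly = 0) (him : z.im ≠ 0) (μ : ℝ) :
    A ≠ μ • 1 := by
  rintro rfl
  rw [smul_one_eq_diagonal, charpoly_diagonal, Finset.prod_const, map_pow, map_sub, aeval_X,
    aeval_C] at hz
  apply him
  rw [sub_eq_zero.1 (pow_eq_zero_iff'.1 hz).1]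
  simp

def IsProperConeR3.toConvexCone {Ω : Set (Fin 3 → ℝ)} (hΩ : IsProperConeR3 Ω) :
    ConvexCone ℝ (Fin 3 → ℝ) where
  carrier := Ω
  smul_mem' c hc x hx := hΩ.2.2.2.1 x hx c hc
  add_mem' x hx y hy := by
    convert hΩ.2.2.2.1 _ (hΩ.2.1 hx hy (by norm_num : (0 : ℝ) ≤ 1 / 2)
      (by norm_num : (0 : ℝ) ≤ 1 / 2) (by norm_num)) 2 two_pos using 1
    module

theorem PreservesConeR3.image_image {A : Matrix (Fin 3) (Fin 3) ℝ} {Ω : Set (Fin 3 → ℝ)}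
    (h : PreservesConeR3 A Ω) : A.mulVecLin '' (A.mulVecLin '' Ω) = Ω := by
  rcases h with h | h
  · rw [h, h]
  · rw [h, Set.image_comm (g' := fun v => -v) (fun v => map_neg _ v), h, Set.image_image]
    simp

theorem PreservesConeR3.sq_eq_sq_norm {A : Matrix (Fin 3) (Fin 3) ℝ} (hA : IsUnit A.det)
    {Ω : Set (Fin 3 → ℝ)} (hΩ : IsProperConeR3 Ω) (hpres : PreservesConeR3 A Ω) {z : ℂ}
    (hz : z.im ≠ 0) {μ : ℝ} (hfac : A.charpoly = realQuadratic z * (X - C μ)) :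
    μ ^ 2 = ‖z‖ ^ 2 := by
  let K := hΩ.toConvexCone
  obtain ⟨hopen, -, hne, -, hline⟩ := id hΩ
  set f := Matrix.toLinAlgEquiv' A
  set g := Matrix.toLinAlgEquiv' A⁻¹
  have hgf : ∀ v, g (f v) = v := fun v => by
    simp [f, g, Matrix.toLinAlgEquiv'_apply, Matrix.mulVec_mulVec, Matrix.nonsing_inv_mul A hA]
  have hff : f '' (f '' Ω) = Ω := hpres.image_image
  have hfK : MapsTo (fun x => f (f x)) Ω Ω := fun x hx =>
    hff ▸ mem_image_of_mem _ (mem_image_of_mem _ hx)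
  have hgK : MapsTo (fun x => g (g x)) Ω Ω := by
    intro x hx
    rw [← hff] at hx
    obtain ⟨_, ⟨y, hy, rfl⟩, rfl⟩ := hx
    simpa [hgf] using hy
  have hCH : aeval f ((X - C μ) * realQuadratic z) = 0 := by
    rw [mul_comm, ← hfac, aeval_algEquiv, AlgHom.comp_apply, Matrix.aeval_self_charpoly, map_zero]
  have hfμ : aeval f (X - C μ) ≠ 0 := by
    rw [aeval_algEquiv, AlgHom.comp_apply]
    refine (map_ne_zero_iff _ Matrix.toLinAlgEquiv'.injective).2 ?_
    rw [map_sub, aeval_X, aeval_C, Algebra.algebraMap_eq_smul_one, sub_ne_zero]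
    refine A.ne_smul_one_of_aeval_charpoly_eq_zero ?_ hz μ
    rw [hfac, map_mul, aeval_self_realQuadratic, zero_mul]
  obtain ⟨u, w, hc, hu, hw, hw0⟩ :=
    hopen.exists_add_mem_of_aeval_mul_eq_zero hne (isCoprime_X_sub_C_realQuadratic hz μ) hCH hfμ
  obtain ⟨W, rfl, hW⟩ := exists_intertwining_of_aeval_realQuadratic_eq_zero hz hw
  have hfu : f u = μ • u := by
    simpa [sub_eq_zero, Algebra.algebraMap_eq_smul_one] using hu
  have h1 := K.sq_norm_le_sq_of_mapsTo hopen hline hfK hfu hz hW hw0 hc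
  have hz0 : z ≠ 0 := by rintro rfl; simp at hz
  have hμ : μ ≠ 0 := by
    rintro rfl
    have : 0 < ‖z‖ ^ 2 := by positivity
    linarith [h1]
  have hgu : g u = μ⁻¹ • u := by
    rw [← hgf (μ⁻¹ • u), map_smul, hfu, smul_smul, inv_mul_cancel₀ hμ, one_smul]
  have hgW : ∀ ξ, g (W ξ) = W (z⁻¹ * ξ) := fun ξ => by
    rw [← hgf (W (z⁻¹ * ξ)), hW, mul_inv_cancel_left₀ hz0]
  have hzinv : z⁻¹.im ≠ 0 := by
    simpa [Complex.inv_im, Complex.normSq_eq_zero, hz0] using hz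
  have h2 := K.sq_norm_le_sq_of_mapsTo hopen hline hgK hgu hzinv hgW hw0 hc
  rw [norm_inv, inv_pow, inv_pow, inv_le_inv₀ (by positivity) (by positivity)] at h2
  exact le_antisymm h2 h1

/-- If `γ ∈ SL₃(ℝ)` preserves a properly convex open subset of `ℙ²(ℝ)` and has a non-real
eigenvalue, then the unique real eigenvalue of `γ` equals `1`. -/
theorem real_eigenvalue_eq_one_of_nonreal (A : Matrix (Fin 3) (Fin 3) ℝ) (hdet : A.det = 1)
    (C : Set (Fin 3 → ℝ)) (hC : IsProperConeR3 C) (hpres : PreservesConeR3 A C)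
    (hnonreal : ∃ z ∈ ((A.charpoly).map (algebraMap ℝ ℂ)).roots, z.im ≠ 0) :
    ∀ z ∈ ((A.charpoly).map (algebraMap ℝ ℂ)).roots, z.im = 0 → z = 1 := by
  have hroot : ∀ z ∈ (A.charpoly.map (algebraMap ℝ ℂ)).roots, aeval z A.charpoly = 0 :=
    fun z hz => by rwa [mem_roots_map A.charpoly_monic.ne_zero, ← aeval_def] at hz
  intro z hz hzim
  obtain ⟨z₀, hz₀, hz₀im⟩ := hnonreal
  obtain ⟨μ, hfac⟩ := A.charpoly_monic.exists_eq_realQuadratic_mul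
    (by rw [Matrix.charpoly_natDegree_eq_dim, Fintype.card_fin]) (hroot z₀ hz₀) hz₀im
  have hdetμ : μ * ‖z₀‖ ^ 2 = 1 := by
    have hcoeff := A.det_eq_sign_charpoly_coeff
    rw [hdet, hfac, mul_coeff_zero, coeff_zero_realQuadratic, Fintype.card_fin, coeff_sub,
      coeff_X_zero, coeff_C_zero] at hcoeff
    linarith
  have hsq := hpres.sq_eq_sq_norm (by rw [hdet]; exact isUnit_one) hC hz₀im hfac
  have hμ : μ = 1 := by nlinarith [sq_nonneg (μ - 1), sq_nonneg (μ + 1)]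
  rw [eq_of_aeval_realQuadratic_mul_eq_zero hz₀im hzim (hfac ▸ hroot z hz), hμ, Complex.ofReal_one]
end

section
/- Let Ω₀ = {(x,y) ∈ ℝ² : x > 0, y > x·ln(x)} viewed as a properly convex open subset of ℙ²(ℝ). For every point (x,y) ∈ Ω₀, the Hilbert unit ball B_{(x,y)}(1) has Lebesgue area at most 4x(y − x·ln x), and consequently every pic P = {(x,y) : 0 < x < ε, ax < y < bx} with 0 < a < b has infinite Busemann volume: μ_{Ω₀}(P) = ∫_P dA/Vol(B(1)) ≥ ∫₀^ε (1/(4x))·ln((b − ln x)/(a − ln x)) dx = +∞. -/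
open MeasureTheory

noncomputable section

/-- Parameter of the intersection point `p⁺` of the half-line from `x` in direction `v`
with `∂Ω`. -/
def tPlus (Ω : Set (EuclideanSpace ℝ (Fin 2))) (x v : EuclideanSpace ℝ (Fin 2)) : ℝ :=
  sSup {t : ℝ | x + t • v ∈ Ω}

/-- Parameter of the intersection point `p⁻` of the half-line from `x` in direction `-v`
with `∂Ω`. -/
def tMinus (Ω : Set (EuclideanSpace ℝ (Fin 2))) (x v : EuclideanSpace ℝ (Fin 2)) : ℝ :=
  sInf {t : ℝ | x + t • v ∈ Ω}

/-- The Hilbert–Finsler norm `‖v‖ₓ = (1/‖x - p⁻‖ + 1/‖x - p⁺‖)·‖v‖`. -/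
def finslerNorm (Ω : Set (EuclideanSpace ℝ (Fin 2))) (x v : EuclideanSpace ℝ (Fin 2)) : ℝ :=
  (1 / ‖x - (x + tMinus Ω x v • v)‖ + 1 / ‖x - (x + tPlus Ω x v • v)‖) * ‖v‖

/-- The unit ball `B_x(1)` of the Hilbert–Finsler norm at `x`. -/
def finslerBall (Ω : Set (EuclideanSpace ℝ (Fin 2))) (x : EuclideanSpace ℝ (Fin 2)) :
    Set (EuclideanSpace ℝ (Fin 2)) :=
  {v | finslerNorm Ω x v < 1}

/-- The Lebesgue measure normalized so that the Euclidean unit ball has volume `1`. -/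
def nVol (s : Set (EuclideanSpace ℝ (Fin 2))) : ENNReal :=
  volume s / volume {v : EuclideanSpace ℝ (Fin 2) | ‖v‖ < 1}

/-- The Busemann measure of `A ⊆ Ω`:  `μ_Ω(A) = ∫_A dVol(x) / Vol(B_x(1))`, where `Vol`
is the normalized Lebesgue measure. -/
def busemann (Ω A : Set (EuclideanSpace ℝ (Fin 2))) : ENNReal :=
  ∫⁻ x in A, (nVol (finslerBall Ω x))⁻¹
    ∂((volume {v : EuclideanSpace ℝ (Fin 2) | ‖v‖ < 1})⁻¹ • volume)

end

/-! A vector `v` with `‖v‖ₓ < 1` satisfies `x ± v ∈ Ω₀`: the norm is `1/|t₋| + 1/|t₊|` for the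
parameters `t±` at which the line `x + t v` leaves `Ω₀`, so both exceed `1` in absolute value. For `x = (x, y)` the point `x ± v` lies right of the
`y`-axis and above the tangent line of the convex function `s ↦ s log s` at `x`, so `B_x(1)` lies in
the parallelogram `|v₀| < x`, `|v₁ - (log x + 1) v₀| < y - x log x`, of area `4x(y - x log x)`.
On the pic near `0` this gives `1 / Vol B ≥ 1 / (4x²(b - log x))`; integrating over vertical slices
of length `(b - a)x` leaves `∫₀ dx / (x (b - log x))`, which diverges because `log (b - log x)` is,
up to sign, an antiderivative that blows up at `0`. The same integrand bounds
`(1/(4x)) log ((b - log x)/(a - log x))` from below, via `log u ≥ 1 - 1/u`. -/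

open Set Filter Topology Real

lemma mul_log_add_tangent_le {x y : ℝ} (hx : 0 < x) (hy : 0 < y) :
    x * log x + (log x + 1) * (y - x) ≤ y * log y := by
  have h := mul_le_mul_of_nonneg_left (log_le_sub_one_of_pos (div_pos hx hy)) hy.le
  rw [log_div hx.ne' hy.ne', mul_sub, mul_sub, mul_div_cancel₀ _ hy.ne'] at h
  linarith

lemma one_mem_of_abs_sSup_inv_lt_one {T : Set ℝ} (hT : IsOpen T) (hTc : Convex ℝ T)
    (h0 : 0 ∈ T) (h : |sSup T|⁻¹ < 1) : 1 ∈ T := by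
  obtain ⟨t, htT, ht⟩ : ∃ t ∈ T, 1 < t := by
    by_cases hbdd : BddAbove T
    · obtain ⟨s, hsT, hs⟩ := Filter.nonempty_of_mem <|
        inter_mem (mem_nhdsWithin_of_mem_nhds (hT.mem_nhds h0)) (self_mem_nhdsWithin (s := Ioi 0))
      have hpos : 0 < sSup T := hs.trans_le (le_csSup hbdd hsT)
      rw [abs_of_pos hpos, inv_lt_one₀ hpos] at h
      exact exists_lt_of_lt_csSup ⟨0, h0⟩ h
    · -- here `sSup T = 0`, so `h` says nothing, but `T` reaches past `1` anyway
      simpa using not_bddAbove_iff.1 hbdd 1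
  exact hTc.ordConnected.out h0 htT ⟨zero_le_one, ht.le⟩

lemma neg_one_mem_of_abs_sInf_inv_lt_one {T : Set ℝ} (hT : IsOpen T) (hTc : Convex ℝ T)
    (h0 : 0 ∈ T) (h : |sInf T|⁻¹ < 1) : -1 ∈ T :=
  mem_neg.1 <| one_mem_of_abs_sSup_inv_lt_one hT.neg hTc.neg (by simpa using h0)
    (by rwa [Real.sSup_neg, abs_neg])

lemma finslerNorm_eq {Ω : Set (EuclideanSpace ℝ (Fin 2))} (x : EuclideanSpace ℝ (Fin 2))
    {v : EuclideanSpace ℝ (Fin 2)} (hv : v ≠ 0) :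
    finslerNorm Ω x v = |tMinus Ω x v|⁻¹ + |tPlus Ω x v|⁻¹ := by
  have hv' : ‖v‖ ≠ 0 := norm_ne_zero_iff.2 hv
  simp only [finslerNorm, sub_add_cancel_left, norm_neg, norm_smul, Real.norm_eq_abs, one_div,
    mul_inv, add_mul, inv_mul_cancel_right₀ hv']

lemma add_mem_and_sub_mem_of_mem_finslerBall {Ω : Set (EuclideanSpace ℝ (Fin 2))}
    (hconv : Convex ℝ Ω) (hopen : IsOpen Ω) {x v : EuclideanSpace ℝ (Fin 2)} (hx : x ∈ Ω)
    (hv : v ∈ finslerBall Ω x) : x + v ∈ Ω ∧ x - v ∈ Ω := by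
  rcases eq_or_ne v 0 with rfl | hv0
  · simpa using hx
  set T := {t : ℝ | x + t • v ∈ Ω}
  have hT : IsOpen T := hopen.preimage (by fun_prop)
  have hTc : Convex ℝ T :=
    (hconv.translate_preimage_right x).is_linear_preimage (IsLinearMap.isLinearMap_smul' v)
  have h0 : (0 : ℝ) ∈ T := by simpa [T] using hx
  have hlt : |tMinus Ω x v|⁻¹ + |tPlus Ω x v|⁻¹ < 1 := finslerNorm_eq x hv0 ▸ hv
  have hplus : (1 : ℝ) ∈ T := one_mem_of_abs_sSup_inv_lt_one hT hTc h0
    (show |tPlus Ω x v|⁻¹ < 1 by linarith [inv_nonneg.2 (abs_nonneg (tMinus Ω x v))])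
  have hminus : (-1 : ℝ) ∈ T := neg_one_mem_of_abs_sInf_inv_lt_one hT hTc h0
    (show |tMinus Ω x v|⁻¹ < 1 by linarith [inv_nonneg.2 (abs_nonneg (tPlus Ω x v))])
  simp only [T, mem_ofPred_eq, one_smul, neg_one_smul, ← sub_eq_add_neg] at hplus hminus
  exact ⟨hplus, hminus⟩

lemma busemann_eq_setLIntegral (Ω A : Set (EuclideanSpace ℝ (Fin 2))) :
    busemann Ω A = ∫⁻ x in A, (volume (finslerBall Ω x))⁻¹ := by
  have hball : {v : EuclideanSpace ℝ (Fin 2) | ‖v‖ < 1} = Metric.ball 0 1 := by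
    ext v; simp
  have h0 : volume (Metric.ball (0 : EuclideanSpace ℝ (Fin 2)) 1) ≠ 0 :=
    (Metric.measure_ball_pos volume 0 one_pos).ne'
  have htop : volume (Metric.ball (0 : EuclideanSpace ℝ (Fin 2)) 1) ≠ ⊤ := measure_ball_lt_top.ne
  simp only [busemann, nVol, hball, ENNReal.inv_div (Or.inl htop) (Or.inl h0)]
  simp only [div_eq_mul_inv]
  rw [Measure.restrict_smul, lintegral_smul_measure, lintegral_const_mul' _ _ htop, smul_eq_mul,
    ← mul_assoc, ENNReal.inv_mul_cancel h0 htop, one_mul]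

lemma setLIntegral_regionBetween {α : Type*} [MeasurableSpace α] {μ : Measure α} [SFinite μ]
    {f g : α → ℝ} {s : Set α} (hf : Measurable f) (hg : Measurable g) (hs : MeasurableSet s)
    {F : α → ENNReal} (hF : Measurable F) :
    ∫⁻ q in regionBetween f g s, F q.1 ∂μ.prod volume =
      ∫⁻ x in s, F x * ENNReal.ofReal (g x - f x) ∂μ := by
  rw [← withDensity_apply _ (measurableSet_regionBetween hf hg hs), ← prod_withDensity_left hF,
    volume_regionBetween_eq_lintegral' hf hg hs,
    setLIntegral_withDensity_eq_setLIntegral_mul _ hF (by fun_prop) hs]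
  rfl

noncomputable def euclideanFinTwoEquivProd : EuclideanSpace ℝ (Fin 2) ≃ᵐ ℝ × ℝ :=
  (MeasurableEquiv.toLp 2 (Fin 2 → ℝ)).symm.trans MeasurableEquiv.finTwoArrow

lemma euclideanFinTwoEquivProd_apply (p : EuclideanSpace ℝ (Fin 2)) :
    euclideanFinTwoEquivProd p = (p 0, p 1) :=
  rfl

lemma measurePreserving_euclideanFinTwoEquivProd : MeasurePreserving euclideanFinTwoEquivProd :=
  (EuclideanSpace.volume_preserving_symm_measurableEquiv_toLp (Fin 2)).trans
    (volume_preserving_finTwoArrow ℝ)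

lemma isLinearMap_euclideanFinTwoEquivProd : IsLinearMap ℝ euclideanFinTwoEquivProd :=
  ⟨fun _ _ => rfl, fun _ _ => rfl⟩

lemma volume_preimage_regionBetween_parallelogram (c d r : ℝ) (hd : 0 ≤ d) :
    volume (euclideanFinTwoEquivProd ⁻¹'
      regionBetween (fun s => c * s - d) (fun s => c * s + d) (Ioo (-r) r)) =
      ENNReal.ofReal (4 * r * d) := by
  rw [measurePreserving_euclideanFinTwoEquivProd.measure_preimage
      (measurableSet_regionBetween (by fun_prop) (by fun_prop) measurableSet_Ioo).nullMeasurableSet,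
    Measure.volume_eq_prod, volume_regionBetween_eq_lintegral' (by fun_prop) (by fun_prop)
      measurableSet_Ioo]
  simp only [Pi.sub_apply, add_sub_sub_cancel, setLIntegral_const, Real.volume_Ioo]
  rw [← ENNReal.ofReal_mul (by linarith)]
  ring_nf

def logDomain : Set (EuclideanSpace ℝ (Fin 2)) := {p | 0 < p 0 ∧ p 0 * log (p 0) < p 1}

lemma convex_logDomain : Convex ℝ logDomain :=
  (convexOn_mul_log.subset Ioi_subset_Ici_self (convex_Ioi 0)).convex_strict_epigraph
    |>.is_linear_preimage isLinearMap_euclideanFinTwoEquivProd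

lemma isOpen_logDomain : IsOpen logDomain := by
  have h0 : Continuous fun p : EuclideanSpace ℝ (Fin 2) => p 0 := by fun_prop
  have h1 : Continuous fun p : EuclideanSpace ℝ (Fin 2) => p 1 := by fun_prop
  exact (isOpen_lt continuous_const h0).inter (isOpen_lt (continuous_mul_log.comp h0) h1)

lemma finslerBall_logDomain_subset {p : EuclideanSpace ℝ (Fin 2)} (hp : p ∈ logDomain) :
    finslerBall logDomain p ⊆ euclideanFinTwoEquivProd ⁻¹' regionBetween
      (fun s => (log (p 0) + 1) * s - (p 1 - p 0 * log (p 0)))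
      (fun s => (log (p 0) + 1) * s + (p 1 - p 0 * log (p 0))) (Ioo (-p 0) (p 0)) := by
  intro v hv
  obtain ⟨⟨hpos₁, hlt₁⟩, ⟨hpos₂, hlt₂⟩⟩ :=
    add_mem_and_sub_mem_of_mem_finslerBall convex_logDomain isOpen_logDomain hp hv
  simp only [PiLp.add_apply, PiLp.sub_apply] at hpos₁ hlt₁ hpos₂ hlt₂
  have htan₁ := mul_log_add_tangent_le hp.1 hpos₁
  have htan₂ := mul_log_add_tangent_le hp.1 hpos₂
  refine ⟨⟨?_, ?_⟩, ?_, ?_⟩ <;> simp only [euclideanFinTwoEquivProd_apply] <;> linarith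

lemma volume_finslerBall_logDomain_le {p : EuclideanSpace ℝ (Fin 2)} (hp : p ∈ logDomain) :
    volume (finslerBall logDomain p) ≤ ENNReal.ofReal (4 * p 0 * (p 1 - p 0 * log (p 0))) :=
  (measure_mono (finslerBall_logDomain_subset hp)).trans_eq <|
    volume_preimage_regionBetween_parallelogram _ _ _ (by linarith [hp.2])

-- `C log (K - log t)` is an antiderivative of `-C / (t (K - log t))` that blows up at `0⁺`.
lemma lintegral_div_mul_sub_log_eq_top {C K ε : ℝ} (hC : 0 < C) (hK : 0 < K) (hε : 0 < ε)
    (hε1 : ε ≤ 1) :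
    ∫⁻ t in Ioo 0 ε, ENNReal.ofReal (C / (t * (K - log t))) = ⊤ := by
  set g : ℝ → ℝ := fun t => C / (t * (K - log t))
  have hK_sub_log : ∀ t ∈ Ioo (0 : ℝ) 1, 0 < K - log t := fun t ht => by
    linarith [log_neg ht.1 ht.2]
  have hderiv : ∀ t ∈ Ioo (0 : ℝ) 1, HasDerivAt (fun t => C * log (K - log t)) (-g t) t := by
    intro t ht
    refine ((((hasDerivAt_log ht.1.ne').const_sub K).log (hK_sub_log t ht).ne').const_mul C
      ).congr_deriv ?_
    simp only [g]
    rw [div_mul_eq_div_div]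
    ring
  have hnot : ¬IntervalIntegrable g volume 0 ε := by
    refine not_intervalIntegrable_of_tendsto_norm_atTop_of_deriv_isBigO_filter
      (f := fun t => C * log (K - log t)) (𝓝[>] 0) ?_ ?_ ?_ ?_
    · rw [uIcc_of_le hε.le]; exact Icc_mem_nhdsGT hε
    · filter_upwards [Ioo_mem_nhdsGT one_pos] with t ht using (hderiv t ht).differentiableAt
    · refine tendsto_norm_atTop_atTop.comp (Tendsto.const_mul_atTop hC ?_)
      exact tendsto_log_atTop.comp
        (tendsto_atTop_add_const_left _ K (tendsto_neg_atBot_atTop.comp tendsto_log_nhdsGT_zero))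
    · refine (Asymptotics.isBigO_refl g _).neg_left.congr' ?_ EventuallyEq.rfl
      filter_upwards [Ioo_mem_nhdsGT one_pos] with t ht using (hderiv t ht).deriv.symm
  by_contra hfin
  refine hnot ((intervalIntegrable_iff_integrableOn_Ioc_of_le hε.le).2
    ((integrableOn_Ioc_iff_integrableOn_Ioo).2
      ((lintegral_ofReal_ne_top_iff_integrable ?_ ?_).1 hfin)))
  · exact (by fun_prop : Measurable g).aestronglyMeasurable
  · refine ae_restrict_of_forall_mem measurableSet_Ioo fun t ht => ?_
    have := hK_sub_log t ⟨ht.1, ht.2.trans_le hε1⟩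
    have := ht.1
    positivity

lemma lintegral_log_ratio_eq_top {ε a b : ℝ} (hε : 0 < ε) (ha : 0 < a) (hab : a < b) :
    ∫⁻ t in Ioo 0 ε, ENNReal.ofReal (1 / (4 * t) * log ((b - log t) / (a - log t))) = ⊤ := by
  rw [eq_top_iff, ← lintegral_div_mul_sub_log_eq_top (C := (b - a) / 4) (by linarith)
    (ha.trans hab) (lt_min hε one_pos) (min_le_right _ _)]
  refine (setLIntegral_mono' measurableSet_Ioo fun t ht => ENNReal.ofReal_le_ofReal ?_).trans
    (lintegral_mono_set (Ioo_subset_Ioo_right (min_le_left _ _)))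
  have ht0 : 0 < t := ht.1
  have hlog : log t < 0 := log_neg ht0 (ht.2.trans_le (min_le_right _ _))
  have hA : 0 < a - log t := by linarith
  have hB : 0 < b - log t := by linarith
  have hlog_ratio := one_sub_inv_le_log_of_pos (div_pos hB hA)
  rw [inv_div] at hlog_ratio
  calc (b - a) / 4 / (t * (b - log t)) = 1 / (4 * t) * (1 - (a - log t) / (b - log t)) := by
        field_simp; ring
    _ ≤ _ := mul_le_mul_of_nonneg_left hlog_ratio (by positivity)

lemma busemann_logDomain_pic_eq_top {ε a b : ℝ} (hε : 0 < ε) (ha : 0 < a) (hab : a < b) :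
    busemann logDomain {p | 0 < p 0 ∧ p 0 < ε ∧ a * p 0 < p 1 ∧ p 1 < b * p 0} = ⊤ := by
  set ε₁ := min ε 1
  have hε₁ : 0 < ε₁ := lt_min hε one_pos
  set R := regionBetween (fun s => a * s) (fun s => b * s) (Ioo 0 ε₁)
  have hR : MeasurableSet R :=
    measurableSet_regionBetween (by fun_prop) (by fun_prop) measurableSet_Ioo
  set F : ℝ → ENNReal := fun s => ENNReal.ofReal (1 / (4 * s ^ 2 * (b - log s)))
  have hF : Measurable F := by fun_prop
  have hbound : ∀ p ∈ euclideanFinTwoEquivProd ⁻¹' R,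
      F (euclideanFinTwoEquivProd p).1 ≤ (volume (finslerBall logDomain p))⁻¹ := by
    rintro p ⟨⟨hp0, hpε⟩, hpa, hpb⟩
    simp only [euclideanFinTwoEquivProd_apply] at hp0 hpε hpa hpb ⊢
    have hlog : log (p 0) < 0 := log_neg hp0 (hpε.trans_le (min_le_right _ _))
    have hp : p ∈ logDomain := ⟨hp0, by nlinarith⟩
    have hd : 0 < p 1 - p 0 * log (p 0) := by linarith [hp.2]
    calc F (p 0) ≤ ENNReal.ofReal (1 / (4 * p 0 * (p 1 - p 0 * log (p 0)))) :=
          ENNReal.ofReal_le_ofReal (one_div_le_one_div_of_le (by positivity) (by nlinarith))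
      _ = (ENNReal.ofReal (4 * p 0 * (p 1 - p 0 * log (p 0))))⁻¹ := by
          rw [one_div, ENNReal.ofReal_inv_of_pos (by positivity)]
      _ ≤ _ := ENNReal.inv_le_inv.2 (volume_finslerBall_logDomain_le hp)
  rw [eq_top_iff, busemann_eq_setLIntegral]
  calc ⊤ = ∫⁻ s in Ioo 0 ε₁, ENNReal.ofReal ((b - a) / 4 / (s * (b - log s))) :=
        (lintegral_div_mul_sub_log_eq_top (by linarith) (ha.trans hab) hε₁
          (min_le_right _ _)).symm
    _ = ∫⁻ s in Ioo 0 ε₁, F s * ENNReal.ofReal (b * s - a * s) := by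
        refine setLIntegral_congr_fun measurableSet_Ioo fun s hs => ?_
        have hB : 0 < b - log s := by
          linarith [log_neg hs.1 (hs.2.trans_le (min_le_right _ _)), ha.trans hab]
        have := hs.1
        rw [← ENNReal.ofReal_mul (by positivity)]
        congr 1
        field_simp
    _ = ∫⁻ q in R, F q.1 :=
        (setLIntegral_regionBetween (by fun_prop) (by fun_prop) measurableSet_Ioo hF).symm
    _ = ∫⁻ p in euclideanFinTwoEquivProd ⁻¹' R, F (euclideanFinTwoEquivProd p).1 :=
        (measurePreserving_euclideanFinTwoEquivProd.setLIntegral_comp_preimage hR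
          (hF.comp measurable_fst)).symm
    _ ≤ ∫⁻ p in euclideanFinTwoEquivProd ⁻¹' R, (volume (finslerBall logDomain p))⁻¹ :=
        setLIntegral_mono' (hR.preimage euclideanFinTwoEquivProd.measurable) hbound
    _ ≤ _ := lintegral_mono_set <| by
        rintro p ⟨⟨hp0, hpε⟩, hpa, hpb⟩
        exact ⟨hp0, hpε.trans_le (min_le_left _ _), hpa, hpb⟩

/-- Let `Ω₀ = {(x,y) : x > 0, y > x·ln x}`, a properly convex open subset of `ℙ²(ℝ)`.
For every `(x,y) ∈ Ω₀` the Hilbert–Finsler unit ball at `(x,y)` has Lebesgue area at most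
`4x(y - x·ln x)`; consequently every pic `P = {(x,y) : 0 < x < ε, ax < y < bx}` with
`0 < a < b` has infinite Busemann volume:
`μ_{Ω₀}(P) ≥ ∫₀^ε (1/(4x))·ln((b - ln x)/(a - ln x)) dx = +∞`. -/
theorem log_domain_pic_infinite_volume
    (Ω₀ : Set (EuclideanSpace ℝ (Fin 2)))
    (hΩ₀ : Ω₀ = {p | 0 < p 0 ∧ p 0 * Real.log (p 0) < p 1}) :
    (∀ p ∈ Ω₀, volume (finslerBall Ω₀ p) ≤
      ENNReal.ofReal (4 * p 0 * (p 1 - p 0 * Real.log (p 0)))) ∧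
    (∀ ε a b : ℝ, 0 < ε → 0 < a → a < b →
      (∫⁻ t in Set.Ioo (0 : ℝ) ε,
          ENNReal.ofReal (1 / (4 * t) * Real.log ((b - Real.log t) / (a - Real.log t)))) = ⊤ ∧
      busemann Ω₀ {p | 0 < p 0 ∧ p 0 < ε ∧ a * p 0 < p 1 ∧ p 1 < b * p 0} ≥
        ∫⁻ t in Set.Ioo (0 : ℝ) ε,
          ENNReal.ofReal (1 / (4 * t) * Real.log ((b - Real.log t) / (a - Real.log t))) ∧
      busemann Ω₀ {p | 0 < p 0 ∧ p 0 < ε ∧ a * p 0 < p 1 ∧ p 1 < b * p 0} = ⊤) := by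
  change Ω₀ = logDomain at hΩ₀
  subst hΩ₀
  refine ⟨fun p hp => volume_finslerBall_logDomain_le hp, fun ε a b hε ha hab => ?_⟩
  have hbusemann := busemann_logDomain_pic_eq_top hε ha hab
  exact ⟨lintegral_log_ratio_eq_top hε ha hab, hbusemann ▸ le_top, hbusemann⟩
end
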